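/- Hoare while rule in KAT: for tests A, b and Kleene element x, if [A∧b]·x·[¬A] = 0 then [A]·(([b]·x)*·[¬b])·[¬(A∧¬b)] = 0. -/

import Mathlib

/-!
Write `y = [b]·x`. The premise says that `y` cannot lead from `A` to `¬A`, so `[A]·y ≤ y·[A]`,
and this commutation lifts to `[A]·y* ≤ y*·[A]`: the invariant `A` survives every iteration.
Hence `[A]·y*·[¬b]` is bounded by `y*·[A ∧ ¬b]`, which is annihilated by the postcondition's
complement `[¬A] + [b]`.
-/

open Computability

section KleeneAlgebra

variable {X : Type*} [KleeneAlgebra X]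

theorem mul_kstar_le_kstar_mul {a p : X} (h : a * p ≤ p * a) : a * p∗ ≤ p∗ * a := by
  refine mul_kstar_le (le_mul_of_one_le_left' one_le_kstar) ?_
  calc p∗ * a * p = p∗ * (a * p) := mul_assoc _ _ _
    _ ≤ p∗ * (p * a) := by grw [h]
    _ = p∗ * p * a := (mul_assoc _ _ _).symm
    _ ≤ p∗ * a := by grw [kstar_mul_le_kstar]

theorem mul_le_mul_of_mul_mul_compl_eq_zero {t t' y : X} (ht : t ≤ 1) (hsum : t + t' = 1)
    (h : t * y * t' = 0) : t * y ≤ y * t :=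
  calc t * y = t * y * t + t * y * t' := by rw [← mul_add, hsum, mul_one]
    _ = t * y * t := by rw [h, add_zero]
    _ ≤ 1 * y * t := by gcongr
    _ = y * t := by rw [one_mul]

variable {B : Type*} [BooleanAlgebra B] {f : B → X}

theorem map_add_map_compl (hadd : ∀ a b : B, f (a ⊔ b) = f a + f b) (hone : f ⊤ = 1) (a : B) :
    f a + f aᶜ = 1 := by
  rw [← hadd, sup_compl_eq_top, hone]

theorem map_le_one (hadd : ∀ a b : B, f (a ⊔ b) = f a + f b) (hone : f ⊤ = 1) (a : B) :
    f a ≤ 1 :=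
  le_self_add.trans_eq (map_add_map_compl hadd hone a)

theorem map_mul_map_eq_zero_of_disjoint (hmul : ∀ a b : B, f (a ⊓ b) = f a * f b)
    (hzero : f ⊥ = 0) {a b : B} (h : Disjoint a b) : f a * f b = 0 := by
  rw [← hmul, h.eq_bot, hzero]

end KleeneAlgebra

theorem kat_hoare_while {X B : Type*} [KleeneAlgebra X] [BooleanAlgebra B]
    (f : B → X)
    (hmul : ∀ a b : B, f (a ⊓ b) = f a * f b)
    (hadd : ∀ a b : B, f (a ⊔ b) = f a + f b)
    (hone : f ⊤ = 1) (hzero : f ⊥ = 0)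
    (A b : B) (x : X)
    (h : f (A ⊓ b) * x * f Aᶜ = 0) :
    f A * (KStar.kstar (f b * x) * f bᶜ) * f (A ⊓ bᶜ)ᶜ = 0 := by
  set y := f b * x
  have hinv : f A * y ≤ y * f A :=
    mul_le_mul_of_mul_mul_compl_eq_zero (map_le_one hadd hone A) (map_add_map_compl hadd hone A)
      (by rw [← mul_assoc, ← hmul, h])
  have hexit : f A * (y∗ * f bᶜ) * f Aᶜ ≤ 0 :=
    calc f A * (y∗ * f bᶜ) * f Aᶜ = f A * y∗ * (f bᶜ * f Aᶜ) := by simp only [mul_assoc]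
      _ ≤ y∗ * f A * (f bᶜ * f Aᶜ) := by grw [mul_kstar_le_kstar_mul hinv]
      _ = y∗ * (f (A ⊓ bᶜ) * f Aᶜ) := by rw [hmul]; simp only [mul_assoc]
      _ = 0 := by
        rw [map_mul_map_eq_zero_of_disjoint hmul hzero (disjoint_compl_right.mono_left inf_le_left),
          mul_zero]
  have hguard : f A * (y∗ * f bᶜ) * f b = 0 := by
    rw [mul_assoc, mul_assoc, map_mul_map_eq_zero_of_disjoint hmul hzero disjoint_compl_left,
      mul_zero, mul_zero]
  rw [compl_inf, compl_compl, hadd, mul_add, le_zero_iff.mp hexit, hguard, add_zero]
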